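/- Let Ψ ∈ ℂ^{n×n} be invertible and let r ≤ m < n. Define 𝒱_{m,r} := {U ∈ St(r,n) : the m×r matrix consisting of the first m rows of Ψ⁻¹·U (U viewed as a complex matrix) has rank r}. Then 𝒱_{m,r} is dense in St(r,n): for every U ∈ St(r,n) and every δ > 0 there exists V ∈ 𝒱_{m,r} with ‖U − V‖ < δ, where ‖·‖ is the ℓ²-operator norm. -/

import Mathlib

/-!
Let `B` be the first `m` rows of `Ψ⁻¹`; it has full row rank `m ≥ r`. If `B U` has rank `< r`, some
column `j` of `B U` depends on the others, and since `B` maps the real vectors onto a spanning set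
of `ℂᵐ`, there is a real unit vector `u` orthogonal to the columns of `U` with `B u` outside the
column space of `B U`. Rotating column `j` of `U` by a small angle towards `u` stays on the Stiefel
manifold and strictly increases the rank of `B U`, so by induction on the rank defect every point
of the Stiefel manifold is a limit of points where `B U` has rank `r`.
-/

open Matrix Set Submodule
open scoped Matrix.Norms.L2Operator

theorem Submodule.span_range_lt_span_range_update {K V ι : Type*} [Semiring K] [AddCommMonoid V]
    [Module K V] [DecidableEq ι] {v : ι → V} {j : ι} (hj : v j ∈ span K (v '' {j}ᶜ)) {c : V}
    (hc : c ∉ span K (range v)) : span K (range v) < span K (range (Function.update v j c)) := by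
  have hle : span K (v '' {j}ᶜ) ≤ span K (range (Function.update v j c)) := by
    refine span_mono ?_
    rintro _ ⟨k, hk, rfl⟩
    exact ⟨k, Function.update_of_ne hk c v⟩
  refine SetLike.lt_iff_le_and_exists.mpr ⟨span_le.mpr ?_, c, subset_span ⟨j, by simp⟩, hc⟩
  rintro _ ⟨k, rfl⟩
  obtain rfl | hk := eq_or_ne k j
  · exact hle hj
  · exact subset_span ⟨k, Function.update_of_ne hk c v⟩

theorem subset_closure_setOf_eq_of_forall_mem_closure_lt {X : Type*} [TopologicalSpace X]
    {A : Set X} {f : X → ℕ} {N : ℕ} (hf : ∀ x ∈ A, f x ≤ N)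
    (hstep : ∀ x ∈ A, f x < N → x ∈ closure {y | y ∈ A ∧ f x < f y}) :
    A ⊆ closure {y | y ∈ A ∧ f y = N} := by
  suffices h : ∀ d, ∀ x ∈ A, N - f x ≤ d → x ∈ closure {y | y ∈ A ∧ f y = N} from
    fun x hx => h _ x hx le_rfl
  intro d
  induction d with
  | zero => exact fun x hx hd => subset_closure ⟨hx, by have := hf x hx; omega⟩
  | succ d ih =>
    intro x hx hd
    obtain hN | hlt := (hf x hx).eq_or_lt
    · exact subset_closure ⟨hx, hN⟩
    · refine closure_minimal (fun y hy => ih y hy.1 ?_) isClosed_closure (hstep x hx hlt)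
      have := hy.2
      omega

namespace Matrix

variable {R m n ι : Type*}

theorem col_updateCol [DecidableEq ι] (M : Matrix m ι R) (j : ι) (c : m → R) :
    (M.updateCol j c).col = Function.update M.col j c := by
  ext k i
  obtain rfl | hk := eq_or_ne k j <;> simp [*]

theorem rank_lt_rank_updateCol [Field R] [Fintype ι] [DecidableEq ι] {M : Matrix m ι R} {j : ι}
    (hj : M.col j ∈ span R (M.col '' {j}ᶜ)) {c : m → R} (hc : c ∉ span R (range M.col)) :
    M.rank < (M.updateCol j c).rank := by
  rw [rank_eq_finrank_span_cols, rank_eq_finrank_span_cols, col_updateCol]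
  have := FiniteDimensional.span_of_finite R (finite_range (Function.update M.col j c))
  exact Submodule.finrank_lt_finrank_of_lt (span_range_lt_span_range_update hj hc)

theorem transpose_mul_updateCol_eq_one [CommRing R] [Fintype m] [DecidableEq ι]
    {U : Matrix m ι R} (hU : Uᵀ * U = 1) {u : m → R} (hUu : Uᵀ *ᵥ u = 0) (hu : u ⬝ᵥ u = 1)
    {a b : R} (hab : a ^ 2 + b ^ 2 = 1) (j : ι) :
    (U.updateCol j (a • U.col j + b • u))ᵀ * U.updateCol j (a • U.col j + b • u) = 1 := by
  have hcol (k l : ι) : U.col k ⬝ᵥ U.col l = (1 : Matrix ι ι R) k l := by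
    rw [← hU]; rfl
  have hcolu (k : ι) : U.col k ⬝ᵥ u = 0 := congrFun hUu k
  ext k l
  change (U.updateCol j _).col k ⬝ᵥ (U.updateCol j _).col l = _
  rw [col_updateCol]
  simp only [Function.update_apply]
  split_ifs with hk hl hl
  · subst hk hl
    simp only [dotProduct_add, dotProduct_smul, add_dotProduct, smul_dotProduct, hcol,
      one_apply_eq, smul_eq_mul, mul_one, dotProduct_comm u, hcolu, mul_zero, add_zero, hu,
      zero_add]
    linear_combination hab
  · subst hk
    simp [add_dotProduct, hcol, hcolu, dotProduct_comm u, Ne.symm hl]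
  · subst hl
    simp [dotProduct_add, hcol, hcolu, hk]
  · exact hcol k l

theorem mulVec_submatrix_surjective [Fintype n] [Semiring R] {A : Matrix n n R}
    (hA : Function.Surjective A.mulVec) {e : m → n} (he : Function.Injective e) :
    Function.Surjective (A.submatrix e id).mulVec := by
  intro y
  obtain ⟨x, hx⟩ := hA (Function.extend e y 0)
  refine ⟨x, funext fun i => ?_⟩
  rw [← he.extend_apply y 0 i, ← hx]
  rfl

theorem mulVec_mem_span_range_col [Fintype n] [CommSemiring R] (M : Matrix m n R) (v : n → R) :
    M *ᵥ v ∈ span R (range M.col) :=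
  range_mulVecLin M ▸ LinearMap.mem_range_self M.mulVecLin v

theorem exists_mulVec_ofReal_notMem [Fintype n] (B : Matrix m n ℂ)
    (hB : Function.Surjective B.mulVec) {S : Submodule ℂ (m → ℂ)} (hS : S ≠ ⊤) :
    ∃ x : n → ℝ, B *ᵥ (Complex.ofReal ∘ x) ∉ S := by
  by_contra! h
  refine hS (eq_top_iff.mpr fun y _ => ?_)
  obtain ⟨z, rfl⟩ := hB y
  have hz : z = Complex.ofReal ∘ (Complex.re ∘ z) +
      Complex.I • Complex.ofReal ∘ (Complex.im ∘ z) := by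
    funext i
    simp [mul_comm Complex.I]
  rw [hz, mulVec_add, mulVec_smul]
  exact S.add_mem (h _) (S.smul_mem _ (h _))

theorem ofReal_comp_mulVec [Fintype ι] (U : Matrix n ι ℝ) (y : ι → ℝ) :
    Complex.ofReal ∘ (U *ᵥ y) = U.map Complex.ofReal *ᵥ (Complex.ofReal ∘ y) :=
  funext (Complex.ofRealHom.map_mulVec U y)

theorem exists_unit_orthogonal_mulVec_ofReal_notMem [Fintype n] [Fintype ι] [DecidableEq ι]
    {U : Matrix n ι ℝ} (hU : Uᵀ * U = 1) (B : Matrix m n ℂ) (hB : Function.Surjective B.mulVec)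
    (hS : span ℂ (range (B * U.map Complex.ofReal).col) ≠ ⊤) :
    ∃ u : n → ℝ, Uᵀ *ᵥ u = 0 ∧ u ⬝ᵥ u = 1 ∧
      B *ᵥ (Complex.ofReal ∘ u) ∉ span ℂ (range (B * U.map Complex.ofReal).col) := by
  set S := span ℂ (range (B * U.map Complex.ofReal).col)
  obtain ⟨x, hx⟩ := exists_mulVec_ofReal_notMem B hB hS
  set w := x - U *ᵥ (Uᵀ *ᵥ x)
  have hUw : Uᵀ *ᵥ w = 0 := by rw [mulVec_sub, mulVec_mulVec, hU, one_mulVec, sub_self]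
  have hBw : B *ᵥ (Complex.ofReal ∘ w) ∉ S := by
    have hproj : B *ᵥ (Complex.ofReal ∘ (U *ᵥ (Uᵀ *ᵥ x))) ∈ S := by
      rw [ofReal_comp_mulVec, mulVec_mulVec]
      exact mulVec_mem_span_range_col _ _
    have hw : Complex.ofReal ∘ w = Complex.ofReal ∘ x - Complex.ofReal ∘ (U *ᵥ (Uᵀ *ᵥ x)) := by
      funext i
      simp [w]
    rwa [hw, mulVec_sub, S.sub_mem_iff_left hproj]
  have hw : w ≠ 0 := by
    rintro hw
    simp [hw] at hBw
  set s := √(w ⬝ᵥ w)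
  have hww : 0 ≤ w ⬝ᵥ w := Fintype.sum_nonneg fun i => mul_self_nonneg (w i)
  have hs : s ≠ 0 := Real.sqrt_ne_zero'.mpr (hww.lt_of_ne' (dotProduct_self_eq_zero.not.mpr hw))
  refine ⟨s⁻¹ • w, by rw [mulVec_smul, hUw, smul_zero], ?_, ?_⟩
  · have hss : s * s = w ⬝ᵥ w := Real.mul_self_sqrt hww
    rw [smul_dotProduct, dotProduct_smul, ← hss, smul_eq_mul, smul_eq_mul]
    field_simp
  · have hu : Complex.ofReal ∘ (s⁻¹ • w) = (s⁻¹ : ℂ) • (Complex.ofReal ∘ w) := by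
      funext i
      simp
    rwa [hu, mulVec_smul, S.smul_mem_iff (by simpa using hs)]

theorem mem_closure_rank_lt_rank_mul_map_ofReal [Fintype m] [Fintype n] [Fintype ι]
    [DecidableEq ι] (B : Matrix m n ℂ) (hB : Function.Surjective B.mulVec)
    (hιm : Fintype.card ι ≤ Fintype.card m) {U : Matrix n ι ℝ} (hU : Uᵀ * U = 1)
    (hdef : (B * U.map Complex.ofReal).rank < Fintype.card ι) :
    U ∈ closure {V | Vᵀ * V = 1 ∧
      (B * U.map Complex.ofReal).rank < (B * V.map Complex.ofReal).rank} := by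
  set M := B * U.map Complex.ofReal
  have hrank := M.rank_eq_finrank_span_cols
  obtain ⟨j, hj⟩ : ∃ j, M.col j ∈ span ℂ (M.col '' {j}ᶜ) := by
    have : ¬ LinearIndependent ℂ M.col := fun h => by
      rw [linearIndependent_iff_card_eq_finrank_span, Set.finrank, ← hrank] at h
      omega
    simpa [linearIndependent_iff_notMem_span, compl_eq_univ_sdiff] using this
  have hS : span ℂ (range M.col) ≠ ⊤ := fun h => by
    rw [h, finrank_top, Module.finrank_fintype_fun_eq_card] at hrank
    omega
  obtain ⟨u, hUu, hu, hBu⟩ := exists_unit_orthogonal_mulVec_ofReal_notMem hU B hB hS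
  set γ : ℝ → Matrix n ι ℝ := fun t => U.updateCol j (Real.cos t • U.col j + Real.sin t • u)
  have hγ : Continuous γ := by fun_prop
  have hγ0 : γ 0 = U := by
    simp only [γ, Real.cos_zero, Real.sin_zero, one_smul, zero_smul, add_zero]
    exact updateCol_eq_self U j
  have h0 : (0 : ℝ) ∈ closure (Ioo 0 Real.pi) := by
    rw [closure_Ioo Real.pi_pos.ne]
    exact ⟨le_rfl, Real.pi_pos.le⟩
  rw [← hγ0]
  refine map_mem_closure hγ h0 fun t ht =>
    ⟨transpose_mul_updateCol_eq_one hU hUu hu (Real.cos_sq_add_sin_sq t) j, ?_⟩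
  simp only [γ, map_updateCol, mul_updateCol]
  refine rank_lt_rank_updateCol hj fun hc => hBu ?_
  have hcol : B *ᵥ (Complex.ofReal ∘ U.col j) ∈ span ℂ (range M.col) := subset_span ⟨j, rfl⟩
  have hsin : (Real.sin t : ℂ) ≠ 0 := by
    exact_mod_cast (Real.sin_pos_of_pos_of_lt_pi ht.1 ht.2).ne'
  have hcomb : Complex.ofReal ∘ (Real.cos t • U.col j + Real.sin t • u) =
      (Real.cos t : ℂ) • (Complex.ofReal ∘ U.col j) + (Real.sin t : ℂ) • (Complex.ofReal ∘ u) := by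
    funext i
    simp
  rwa [hcomb, mulVec_add, mulVec_smul, mulVec_smul,
    Submodule.add_mem_iff_right _ (smul_mem _ _ hcol), smul_mem_iff _ hsin] at hc

end Matrix

theorem domain_of_attraction_dense
    (n m r : ℕ) (hrm : r ≤ m) (hmn : m < n)
    (Ψ : Matrix (Fin n) (Fin n) ℂ) (hΨ : IsUnit Ψ) :
    ∀ U : Matrix (Fin n) (Fin r) ℝ, Uᵀ * U = 1 →
      ∀ δ : ℝ, 0 < δ →
        ∃ V : Matrix (Fin n) (Fin r) ℝ, Vᵀ * V = 1 ∧
          ((Ψ⁻¹ * V.map (Complex.ofReal ·)).submatrix (Fin.castLE hmn.le) id).rank = r ∧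
          ‖U - V‖ < δ := by
  intro U hU δ hδ
  set B := Ψ⁻¹.submatrix (Fin.castLE hmn.le) id
  have hB : Function.Surjective B.mulVec :=
    mulVec_submatrix_surjective (mulVec_surjective_iff_isUnit.mpr (isUnit_nonsing_inv_iff.mpr hΨ))
      (Fin.castLE_injective _)
  have hsub (V : Matrix (Fin n) (Fin r) ℝ) :
      (Ψ⁻¹ * V.map (Complex.ofReal ·)).submatrix (Fin.castLE hmn.le) id =
        B * V.map Complex.ofReal := by
    rw [submatrix_mul _ _ _ id _ Function.bijective_id, submatrix_id_id]
  have hdense := subset_closure_setOf_eq_of_forall_mem_closure_lt (A := {V | Vᵀ * V = 1})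
    (fun V _ => (B * V.map Complex.ofReal).rank_le_width)
    (fun V hV hlt => mem_closure_rank_lt_rank_mul_map_ofReal B hB (by simpa using hrm) hV
      (by simpa using hlt)) hU
  obtain ⟨V, ⟨hV, hVrank⟩, hUV⟩ := Metric.mem_closure_iff.mp hdense δ hδ
  exact ⟨V, hV, hsub V ▸ hVrank, dist_eq_norm U V ▸ hUV⟩
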